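/- arXiv:2311.10394 — 5 statements merged into one kernel-verified Lean document; each statement's English description precedes it below -/
import Mathlib

section
/- The matrix G has rank 18 over ℚ, and the kernel of G (as a ℚ-linear map ℚ^19 → ℚ^19) is the one-dimensional subspace spanned by r = (3, 2, 4, 6, 5, 4, 3, 2, 1, 0, -1, -2, -3, -4, -5, -6, -4, -2, -3). (Thus the 19 roots E_0,…,E_18 span the rank 18 lattice M with exactly one relation.) -/
/-- Adjacency relation of the dual graph: edges `{i, i+1}` for `1 ≤ i ≤ 16`,
together with `{0, 3}` and `{15, 18}`. -/
def adj (i j : ℕ) : Bool :=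
  (1 ≤ i && i ≤ 16 && j == i + 1) || (1 ≤ j && j ≤ 16 && i == j + 1) ||
  (i == 0 && j == 3) || (i == 3 && j == 0) || (i == 15 && j == 18) || (i == 18 && j == 15)

/-- The Gram matrix of the 19 classes `E_0, …, E_18`. -/
def G : Matrix (Fin 19) (Fin 19) ℤ :=
  Matrix.of fun i j => if i = j then -2 else if adj i.val j.val then 1 else 0

/-- The bilinear form `B(u,v) = uᵀ G v`. -/
def B (u v : Fin 19 → ℤ) : ℤ := dotProduct u (G.mulVec v)

/-- The standard basis vector `e_i` of `ℤ^19`. -/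
def e (i : Fin 19) : Fin 19 → ℤ := Pi.single i 1

/-- The relation vector `(3; 2,4,6,5,4,3,2,1,0,-1,-2,-3,-4,-5,-6,-4,-2; -3)`. -/
def r : Fin 19 → ℤ := ![3, 2, 4, 6, 5, 4, 3, 2, 1, 0, -1, -2, -3, -4, -5, -6, -4, -2, -3]

/-!
`G r = 0` is a direct computation. Conversely, the dual graph is a tree, and the equations
`(G v)_i = 0` can be solved along it starting from the leaf `1`: rows `1, 2, 0` give
`v₂ = 2v₁`, `v₃ = 3v₁`, `v₀ = 3v₁/2`, rows `3, …, 14` give `v_{i+1} = 2v_i - v_{i-1}`, and the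
leaves `17, 18` fix `v₁₆, v₁₇, v₁₈` in terms of `v₁₅`. So every kernel vector is `(v₁/2) • r`,
and rank-nullity gives rank 18.
-/

open Matrix

theorem Matrix.rank_add_one_eq_card_of_ker_eq_span_singleton {K m n : Type*} [Field K]
    [Fintype m] [Fintype n] (M : Matrix m n K) {w : n → K} (hw : w ≠ 0)
    (hker : LinearMap.ker M.mulVecLin = K ∙ w) : M.rank + 1 = Fintype.card n := by
  have := M.mulVecLin.finrank_range_add_finrank_ker
  rwa [hker, finrank_span_singleton hw, Module.finrank_fintype_fun_eq_card] at this

local notation "Gℚ" => G.map (Int.cast : ℤ → ℚ)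

local notation "rℚ" => fun i => (r i : ℚ)

theorem G_mulVec_r : G *ᵥ r = 0 := by decide

theorem map_G_mulVec_r : Gℚ *ᵥ rℚ = 0 := by
  ext i
  simpa [G_mulVec_r, Function.comp_def] using ((Int.castRingHom ℚ).map_mulVec G r i).symm

theorem eq_smul_r_of_map_G_mulVec_eq_zero {v : Fin 19 → ℚ} (hv : Gℚ *ᵥ v = 0) :
    v = (v 1 / 2) • rℚ := by
  have rows : ∀ i, ∑ j, (G i j : ℚ) * v j = 0 := fun i => congrFun hv i
  simp [Fin.forall_fin_succ, Fin.sum_univ_succ, G, adj] at rows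
  obtain ⟨h0, h1, h2, h3, h4, h5, h6, h7, h8, h9, h10, h11, h12, h13, h14, h15, h16, h17,
    h18⟩ := rows
  funext i
  fin_cases i <;> simp [r] <;> linarith

theorem map_G_mulVec_eq_zero_iff (v : Fin 19 → ℚ) : Gℚ *ᵥ v = 0 ↔ ∃ c : ℚ, v = c • rℚ := by
  refine ⟨fun hv => ⟨v 1 / 2, eq_smul_r_of_map_G_mulVec_eq_zero hv⟩, ?_⟩
  rintro ⟨c, rfl⟩
  rw [mulVec_smul, map_G_mulVec_r, smul_zero]

/-- `G` has rank 18 over `ℚ`, and the kernel of `G` as a `ℚ`-linear map is the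
one-dimensional subspace spanned by `r`. -/
theorem G_rank_eighteen_kernel_span :
    (G.map (Int.cast : ℤ → ℚ)).rank = 18 ∧
      ∀ v : Fin 19 → ℚ,
        (G.map (Int.cast : ℤ → ℚ)).mulVec v = 0 ↔ ∃ c : ℚ, v = c • fun i => (r i : ℚ) := by
  have hker : LinearMap.ker (Gℚ).mulVecLin = ℚ ∙ rℚ := by
    ext v
    simp only [LinearMap.mem_ker, mulVecLin_apply, map_G_mulVec_eq_zero_iff,
      Submodule.mem_span_singleton, eq_comm]
  have hr : rℚ ≠ 0 := fun h => by simpa [r] using congrFun h 1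
  have hrank := (Gℚ).rank_add_one_eq_card_of_ker_eq_span_singleton hr hker
  exact ⟨by simpa using hrank, map_G_mulVec_eq_zero_iff⟩
end

section
/- The vectors r̃, r_S, r_T all lie in the kernel of G′ (i.e. G′·r̃ = G′·r_S = G′·r_T = 0), and G′ has rank 18 over ℚ, so its kernel is exactly the span of r̃, r_S, r_T. (These are the three linear-equivalence relations (1), (2), (3) among the 21 classes E_0,…,E_18, S, T on a generic M-polarised K3 surface.) -/
/-- The entries of `G'` in the rows and columns indexed by 19 (the curve `S`)
and 20 (the curve `T`). -/
def ext (i j : ℕ) : ℤ :=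
  if i = 19 then
    (if j = 19 then 0 else if j = 20 then 2 else if j = 1 ∨ j = 17 then 1 else 0)
  else if i = 20 then
    (if j = 19 then 2 else if j = 20 then 2 else if j = 0 ∨ j = 18 then 1 else 0)
  else if j = 19 then (if i = 1 ∨ i = 17 then 1 else 0)
  else (if i = 0 ∨ i = 18 then 1 else 0)

/-- The 21×21 Gram matrix `G'` of the classes `E_0, …, E_18, S, T`. -/
def G' : Matrix (Fin 21) (Fin 21) ℤ :=
  Matrix.of fun i j =>
    if h : i.val < 19 ∧ j.val < 19 then G ⟨i.val, h.1⟩ ⟨j.val, h.2⟩ else ext i.val j.val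

/-- The relation vector `r̃ = (r, 0, 0) ∈ ℤ^21`. -/
def rt : Fin 21 → ℤ :=
  ![3, 2, 4, 6, 5, 4, 3, 2, 1, 0, -1, -2, -3, -4, -5, -6, -4, -2, -3, 0, 0]

/-- The relation vector `r_S = (s, -1, 0) ∈ ℤ^21`. -/
def rS : Fin 21 → ℤ :=
  ![1, 0, 1, 2, 2, 2, 2, 2, 2, 2, 2, 2, 2, 2, 2, 2, 1, 0, 1, -1, 0]

/-- The relation vector `r_T = (t, 0, -1) ∈ ℤ^21`. -/
def rT : Fin 21 → ℤ :=
  ![1, 1, 2, 3, 3, 3, 3, 3, 3, 3, 3, 3, 3, 3, 3, 3, 2, 1, 1, 0, -1]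

namespace Matrix

variable {l m n K : Type*} [Fintype l] [Fintype m] [Fintype n]

theorem rank_eq_card_width_of_mul_eq_one [DecidableEq m] [CommRing K] [StrongRankCondition K]
    {R : Matrix n m K} {P : Matrix m n K} (hPR : P * R = 1) :
    R.rank = Fintype.card m :=
  le_antisymm R.rank_le_card_width (by simpa [hPR] using rank_mul_le_right P R)

variable [DecidableEq n]

theorem mulVec_eq_zero_iff_of_mul_add_mul_eq_one [Semiring K] {M : Matrix l n K}
    {R : Matrix n m K} {P : Matrix m n K} {L : Matrix n l K} (hMR : M * R = 0)
    (hLRP : L * M + R * P = 1) (v : n → K) :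
    M *ᵥ v = 0 ↔ ∃ c, v = R *ᵥ c := by
  constructor
  · intro hv
    refine ⟨P *ᵥ v, ?_⟩
    calc v = (L * M + R * P) *ᵥ v := by rw [hLRP, one_mulVec]
      _ = R *ᵥ (P *ᵥ v) := by
        rw [add_mulVec, ← mulVec_mulVec, hv, mulVec_zero, zero_add, mulVec_mulVec]
  · rintro ⟨c, rfl⟩
    rw [mulVec_mulVec, hMR, zero_mulVec]

theorem rank_add_rank_eq_of_mul_add_mul_eq_one [Field K] {M : Matrix l n K}
    {R : Matrix n m K} {P : Matrix m n K} {L : Matrix n l K} (hMR : M * R = 0)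
    (hLRP : L * M + R * P = 1) :
    M.rank + R.rank = Fintype.card n := by
  have hker : LinearMap.ker M.mulVecLin = LinearMap.range R.mulVecLin := by
    ext v
    simp [mulVec_eq_zero_iff_of_mul_add_mul_eq_one hMR hLRP, eq_comm]
  rw [rank, rank, ← hker, LinearMap.finrank_range_add_finrank_ker,
    Module.finrank_fintype_fun_eq_card]

end Matrix

open Matrix

def gramInvE8 : Matrix (Fin 8) (Fin 8) ℤ :=
  -!![8, 5, 10, 15, 12, 9, 6, 3;
    5, 4, 7, 10, 8, 6, 4, 2;
    10, 7, 14, 20, 16, 12, 8, 4;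
    15, 10, 20, 30, 24, 18, 12, 6;
    12, 8, 16, 24, 20, 15, 10, 5;
    9, 6, 12, 18, 15, 12, 8, 4;
    6, 4, 8, 12, 10, 8, 6, 3;
    3, 2, 4, 6, 5, 4, 3, 2]

def gramInvE10 : Matrix (Fin 10) (Fin 10) ℤ :=
  !![0, 1, 2, 3, 4, 5, 6, 4, 2, 3;
    1, 2, 4, 6, 8, 10, 12, 8, 4, 6;
    2, 4, 6, 9, 12, 15, 18, 12, 6, 9;
    3, 6, 9, 12, 16, 20, 24, 16, 8, 12;
    4, 8, 12, 16, 20, 25, 30, 20, 10, 15;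
    5, 10, 15, 20, 25, 30, 36, 24, 12, 18;
    6, 12, 18, 24, 30, 36, 42, 28, 14, 21;
    4, 8, 12, 16, 20, 24, 28, 18, 9, 14;
    2, 4, 6, 8, 10, 12, 14, 9, 4, 7;
    3, 6, 9, 12, 15, 18, 21, 14, 7, 10]

def partialInverse : Matrix (Fin 21) (Fin 21) ℤ :=
  Matrix.of fun i j =>
    if h : i.val < 8 ∧ j.val < 8 then gramInvE8 ⟨i, h.1⟩ ⟨j, h.2⟩
    else if h : 9 ≤ i.val ∧ i.val < 19 ∧ 9 ≤ j.val ∧ j.val < 19 then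
      gramInvE10 ⟨i - 9, by omega⟩ ⟨j - 9, by omega⟩
    else 0

def relationMatrix : Matrix (Fin 21) (Fin 3) ℤ := Matrix.of fun i k => ![rt, rS, rT] k i

def relationCoords : Matrix (Fin 3) (Fin 21) ℤ :=
  Matrix.of ![fun j => if j = 8 then 1 else if j = 19 then 2 else if j = 20 then 3 else 0,
    fun j => if j = 19 then -1 else 0, fun j => if j = 20 then -1 else 0]

theorem relationMatrix_map_mulVec {K : Type*} [CommSemiring K] (f : ℤ →+* K) (c : Fin 3 → K) :
    relationMatrix.map f *ᵥ c = c 0 • (fun i => f (rt i)) + c 1 • (fun i => f (rS i))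
      + c 2 • (fun i => f (rT i)) := by
  ext i
  simp [relationMatrix, mulVec, dotProduct, Fin.sum_univ_three, mul_comm]

theorem G'_mulVec_rt : G' *ᵥ rt = 0 := by decide
theorem G'_mulVec_rS : G' *ᵥ rS = 0 := by decide
theorem G'_mulVec_rT : G' *ᵥ rT = 0 := by decide

theorem G'_mul_relationMatrix : G' * relationMatrix = 0 := by
  ext i k
  fin_cases k
  · exact congrFun G'_mulVec_rt i
  · exact congrFun G'_mulVec_rS i
  · exact congrFun G'_mulVec_rT i

theorem relationCoords_mul_relationMatrix : relationCoords * relationMatrix = 1 := by decide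

set_option maxHeartbeats 400000 in
theorem partialInverse_mul_G'_add_relationMatrix_mul_relationCoords :
    partialInverse * G' + relationMatrix * relationCoords = 1 := by
  decide

/-- `r̃, r_S, r_T` lie in the kernel of `G'`, and `G'` has rank 18 over `ℚ`,
so its kernel is exactly the span of `r̃, r_S, r_T`. -/
theorem G'_kernel :
    G'.mulVec rt = 0 ∧ G'.mulVec rS = 0 ∧ G'.mulVec rT = 0 ∧
    (G'.map (Int.cast : ℤ → ℚ)).rank = 18 ∧
    ∀ v : Fin 21 → ℚ,
      (G'.map (Int.cast : ℤ → ℚ)).mulVec v = 0 ↔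
        ∃ a b c : ℚ, v = a • (fun i => (rt i : ℚ)) + b • (fun i => (rS i : ℚ))
          + c • (fun i => (rT i : ℚ)) := by
  set f := Int.castRingHom ℚ
  have hMR : G'.map f * relationMatrix.map f = 0 := by
    rw [← Matrix.map_mul, G'_mul_relationMatrix, Matrix.map_zero _ (map_zero f)]
  have hPR : relationCoords.map f * relationMatrix.map f = 1 := by
    rw [← Matrix.map_mul, relationCoords_mul_relationMatrix,
      Matrix.map_one _ (map_zero f) (map_one f)]
  have hLRP :
      partialInverse.map f * G'.map f + relationMatrix.map f * relationCoords.map f = 1 := by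
    rw [← Matrix.map_mul, ← Matrix.map_mul, ← Matrix.map_add _ (map_add f),
      partialInverse_mul_G'_add_relationMatrix_mul_relationCoords,
      Matrix.map_one _ (map_zero f) (map_one f)]
  refine ⟨G'_mulVec_rt, G'_mulVec_rS, G'_mulVec_rT, ?_, fun v => ?_⟩
  · change (G'.map f).rank = 18
    have hsum := Matrix.rank_add_rank_eq_of_mul_add_mul_eq_one hMR hLRP
    rw [Matrix.rank_eq_card_width_of_mul_eq_one hPR, Fintype.card_fin, Fintype.card_fin] at hsum
    omega
  · change G'.map f *ᵥ v = 0 ↔ _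
    rw [Matrix.mulVec_eq_zero_iff_of_mul_add_mul_eq_one hMR hLRP]
    simp [Fin.exists_fin_succ_pi, relationMatrix_map_mulVec]
end

section
/- Let d1 = (4,3,6,9,8,7,6,5,4,3,2,1,0,0,0,0,0,0,0,0,0), d2 = (1,1,2,3,3,3,3,3,3,3,3,3,3,4,5,6,4,2,3,0,0), d3 = (0,1,1,1,1,1,1,1,1,1,1,1,1,2,3,4,3,2,2,1,0), d4 = (0,0,0,0,0,0,0,0,0,0,0,0,0,1,2,3,2,1,2,0,1) in ℤ^21. Then d1ᵀG′d1 = 4, and d1 − d2 = r̃, d2 − d3 = r_S, d3 − d4 = r_T − r_S; in particular d1, d2, d3, d4 are pairwise congruent modulo the ℤ-span of {r̃, r_S, r_T}. (These are the four linearly equivalent divisors of self-intersection 4 giving the quartic normal form of an M-polarised K3 surface in ℙ³.) -/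
/-- The divisor `d1`. -/
def d1 : Fin 21 → ℤ :=
  ![4, 3, 6, 9, 8, 7, 6, 5, 4, 3, 2, 1, 0, 0, 0, 0, 0, 0, 0, 0, 0]

/-- The divisor `d2`. -/
def d2 : Fin 21 → ℤ :=
  ![1, 1, 2, 3, 3, 3, 3, 3, 3, 3, 3, 3, 3, 4, 5, 6, 4, 2, 3, 0, 0]

/-- The divisor `d3`. -/
def d3 : Fin 21 → ℤ :=
  ![0, 1, 1, 1, 1, 1, 1, 1, 1, 1, 1, 1, 1, 2, 3, 4, 3, 2, 2, 1, 0]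

/-- The divisor `d4`. -/
def d4 : Fin 21 → ℤ :=
  ![0, 0, 0, 0, 0, 0, 0, 0, 0, 0, 0, 0, 0, 1, 2, 3, 2, 1, 2, 0, 1]

theorem Submodule.sub_mem_of_castSucc_sub_succ_mem {R M : Type*} [Ring R] [AddCommGroup M]
    [Module R M] (p : Submodule R M) {n : ℕ} (v : Fin (n + 1) → M)
    (h : ∀ i : Fin n, v i.castSucc - v i.succ ∈ p) (i j : Fin (n + 1)) : v i - v j ∈ p := by
  have from_zero : ∀ k, v 0 - v k ∈ p := by
    refine Fin.induction (by simp) fun k hk => ?_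
    simpa using p.add_mem hk (h k)
  simpa using p.sub_mem (from_zero j) (from_zero i)

/-- The four linearly equivalent divisors of self-intersection 4 giving the
quartic normal form: `d1ᵀ G' d1 = 4`, `d1 - d2 = r̃`, `d2 - d3 = r_S`,
`d3 - d4 = r_T - r_S`, and the `dᵢ` are pairwise congruent modulo the
`ℤ`-span of `{r̃, r_S, r_T}`. -/
theorem quartic_divisors :
    dotProduct d1 (G'.mulVec d1) = 4 ∧
    d1 - d2 = rt ∧ d2 - d3 = rS ∧ d3 - d4 = rT - rS ∧
    ∀ i j : Fin 4, (![d1, d2, d3, d4] i) - (![d1, d2, d3, d4] j) ∈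
      Submodule.span ℤ ({rt, rS, rT} : Set (Fin 21 → ℤ)) := by
  have h12 : d1 - d2 = rt := by decide
  have h23 : d2 - d3 = rS := by decide
  have h34 : d3 - d4 = rT - rS := by decide
  set N := Submodule.span ℤ ({rt, rS, rT} : Set (Fin 21 → ℤ))
  have hrt : rt ∈ N := Submodule.subset_span (by simp)
  have hrS : rS ∈ N := Submodule.subset_span (by simp)
  have hrT : rT ∈ N := Submodule.subset_span (by simp)
  refine ⟨by decide, h12, h23, h34, N.sub_mem_of_castSucc_sub_succ_mem _ fun i => ?_⟩
  fin_cases i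
  · simpa [h12] using hrt
  · simpa [h23] using hrS
  · simpa [h34] using N.sub_mem hrT hrS
end

section
/- For all b0, b1, b2, b3, b4 ∈ ℂ there exist γ, δ, ε, a2, a3 ∈ ℂ such that the ℂ-algebra endomorphism φ of ℂ[y, z, w] determined by φ(y) = y + γ, φ(z) = z, φ(w) = w + δ·y·z + ε·z sends the polynomial z³ + b0·z + y³·z² + w² + b1·z² + b2·y·z² + b3·y²·z² + w·y·z + b4·w·z to z³ + b0·z + y³·z² + w² + a2·z² + a3·y·z². (Completing the square in w eliminates the wyz and wz terms, and completing the cube in y eliminates the y²z² term, yielding equation (7) of the paper, the common affine normal form for the E_7E_11, D_5E_13 and A_1A_2E_15 degenerations.) -/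
open MvPolynomial

/-- The variable `y` in `ℂ[y, z, w]`. -/
noncomputable def y : MvPolynomial (Fin 3) ℂ := X 0

/-- The variable `z` in `ℂ[y, z, w]`. -/
noncomputable def z : MvPolynomial (Fin 3) ℂ := X 1

/-- The variable `w` in `ℂ[y, z, w]`. -/
noncomputable def w : MvPolynomial (Fin 3) ℂ := X 2

/-- Completing the square in `w` and the cube in `y` yields the common affine
normal form for the `E₇E₁₁`, `D₅E₁₃` and `A₁A₂E₁₅` degenerations. -/
theorem toric_chain_normal_form (b0 b1 b2 b3 b4 : ℂ) :
    ∃ γ δ ε a2 a3 : ℂ,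
      aeval (fun i : Fin 3 =>
          if i = 0 then y + C γ else if i = 1 then z else w + C δ * y * z + C ε * z)
        (z ^ 3 + C b0 * z + y ^ 3 * z ^ 2 + w ^ 2 + C b1 * z ^ 2 + C b2 * y * z ^ 2
          + C b3 * y ^ 2 * z ^ 2 + w * y * z + C b4 * w * z)
      = z ^ 3 + C b0 * z + y ^ 3 * z ^ 2 + w ^ 2 + C a2 * z ^ 2 + C a3 * y * z ^ 2 := by
  refine ⟨(1 - 4*b3)/12, -1/2, -((1 - 4*b3)/12 + b4)/2,
    ((1-4*b3)/12)^3 + b1 + b2*((1-4*b3)/12) + b3*((1-4*b3)/12)^2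
      + b4*(-((1 - 4*b3)/12 + b4)/2) + (-((1 - 4*b3)/12 + b4)/2)^2
      + (-((1 - 4*b3)/12 + b4)/2)*((1-4*b3)/12),
    3*((1-4*b3)/12)^2 + b2 + 2*b3*((1-4*b3)/12) + b4*(-1/2)
      + 2*(-1/2)*(-((1 - 4*b3)/12 + b4)/2) + (-1/2)*((1-4*b3)/12)
      + (-((1 - 4*b3)/12 + b4)/2), ?_⟩
  apply MvPolynomial.funext
  intro x
  simp only [y, z, w, map_add, map_mul, map_pow, aeval_C, aeval_X,
    show ((2:Fin 3) = 0) = False by simp, show ((2:Fin 3) = 1) = False by simp,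
    show ((1:Fin 3) = 0) = False by simp, if_true, if_false, ite_true, ite_false,
    eval_add, eval_mul, eval_pow, eval_C, eval_X, algebraMap_eq]
  ring
end

section
/- Let α, β, λ be nonzero complex numbers with α⁴ ≠ 1, β² ≠ α², β ≠ α³, β ≠ α⁻³, and (α·β)² ≠ 1. If λ·α ∈ {α, α⁻¹, β, β⁻¹} and λ·α⁻¹ ∈ {α, α⁻¹, β, β⁻¹}, then λ = 1. (This is the key step in the proof of Lemma 2.2: an automorphism of ℙ¹ fixing 0 and ∞, necessarily of the form z ↦ λz, which permutes the four points α, α⁻¹, β, β⁻¹ over which the I₁ fibres of the standard fibration lie, must be the identity when α and β are generic; consequently the group of automorphisms of a generic M-polarised K3 surface fixing the polarisation is generated by the fibrewise elliptic involution.) -/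
/-- An automorphism `z ↦ λz` of `ℙ¹` fixing `0` and `∞` which permutes the four
points `α, α⁻¹, β, β⁻¹` must be the identity when `α` and `β` are generic. -/
theorem involution_lemma (α β l : ℂ) (hα : α ≠ 0) (hβ : β ≠ 0) (hl : l ≠ 0)
    (h1 : α ^ 4 ≠ 1) (h2 : β ^ 2 ≠ α ^ 2) (h3 : β ≠ α ^ 3) (h4 : β ≠ α⁻¹ ^ 3)
    (h5 : (α * β) ^ 2 ≠ 1)
    (ha : l * α = α ∨ l * α = α⁻¹ ∨ l * α = β ∨ l * α = β⁻¹)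
    (hb : l * α⁻¹ = α ∨ l * α⁻¹ = α⁻¹ ∨ l * α⁻¹ = β ∨ l * α⁻¹ = β⁻¹) :
    l = 1 := by
  rcases ha with h | h | h | h
  · exact mul_right_cancel₀ hα (by rw [h, one_mul])
  · rcases hb with h' | h' | h' | h' <;> field_simp at h h'
    · exact absurd (show α ^ 4 = 1 by linear_combination h - α ^ 2 * h') h1
    · exact h'
    · exfalso; apply h4; field_simp
      linear_combination h - α ^ 2 * h'
    · exact absurd (show β = α ^ 3 by linear_combination α ^ 2 * h' - β * h) h3
  · rcases hb with h' | h' | h' | h' <;> field_simp at h h'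
    · exact absurd (show β = α ^ 3 by linear_combination α * h' - h) h3
    · exact h'
    · exfalso
      have hq : β * α ^ 2 = β * 1 := by linear_combination h - α * h'
      have hq2 : α ^ 2 = 1 := mul_left_cancel₀ hβ hq
      exact h1 (by linear_combination (α ^ 2 + 1) * hq2)
    · exact absurd (show β ^ 2 = α ^ 2 by linear_combination α * h' - β * h) h2
  · rcases hb with h' | h' | h' | h' <;> field_simp at h h'
    · exfalso; apply h4; field_simp
      linear_combination h - α * β * h'
    · exact h'
    · exact absurd (show (α * β) ^ 2 = 1 by linear_combination h - α * β * h') h5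
    · exact absurd (show α ^ 4 = 1 by
        linear_combination (α ^ 2 + 1) * (h - α * h')) h1
end
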